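/- arXiv:2305.02764 — 5 statements merged into one kernel-verified Lean document; each statement's English description precedes it below -/
import Mathlib

section
/- If A is an M-matrix, B is a Z-matrix, and A ≤ B entrywise, then B is an M-matrix. -/
open Matrix BigOperators Filter

/-- Componentwise absolute value of a vector. -/
def vecAbs {n : ℕ} (v : Fin n → ℝ) : Fin n → ℝ := fun i => |v i|

/-- Entrywise absolute value of a matrix. -/
def matAbs {n : ℕ} (A : Matrix (Fin n) (Fin n) ℝ) : Matrix (Fin n) (Fin n) ℝ :=
  Matrix.of fun i j => |A i j|

/-- A Z-matrix: off-diagonal entries are nonpositive. -/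
def IsZMatrix {n : ℕ} (A : Matrix (Fin n) (Fin n) ℝ) : Prop :=
  ∀ i j, i ≠ j → A i j ≤ 0

/-- An M-matrix: a Z-matrix that is invertible with entrywise nonnegative inverse. -/
def IsMMatrix {n : ℕ} (A : Matrix (Fin n) (Fin n) ℝ) : Prop :=
  IsZMatrix A ∧ IsUnit A.det ∧ ∀ i j, 0 ≤ A⁻¹ i j

/-- The comparison matrix ⟨A⟩. -/
def cmpMatrix {n : ℕ} (A : Matrix (Fin n) (Fin n) ℝ) : Matrix (Fin n) (Fin n) ℝ :=
  Matrix.of fun i j => if i = j then |A i j| else -|A i j|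

/-- An H-matrix: its comparison matrix is an M-matrix. -/
def IsHMatrix {n : ℕ} (A : Matrix (Fin n) (Fin n) ℝ) : Prop :=
  IsMMatrix (cmpMatrix A)

/-- An H₊-matrix: an H-matrix with positive diagonal entries. -/
def IsHPlusMatrix {n : ℕ} (A : Matrix (Fin n) (Fin n) ℝ) : Prop :=
  IsHMatrix A ∧ ∀ i, 0 < A i i

/-- A P-matrix: all principal minors are positive. -/
def IsPMatrix {n : ℕ} (A : Matrix (Fin n) (Fin n) ℝ) : Prop :=
  ∀ s : Finset (Fin n),
    0 < (A.submatrix (fun i : s => (i : Fin n)) (fun i : s => (i : Fin n))).det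

/-- Spectral radius: supremum of the moduli of the (complex) eigenvalues. -/
noncomputable def specRad {n : ℕ} (A : Matrix (Fin n) (Fin n) ℝ) : ℝ :=
  sSup {x : ℝ | ∃ μ : ℂ, (A.map (Complex.ofReal)).charpoly.IsRoot μ ∧ x = ‖μ‖}

/-- Strictly lower triangular part of a matrix. -/
def strictLower {n : ℕ} (A : Matrix (Fin n) (Fin n) ℝ) : Matrix (Fin n) (Fin n) ℝ :=
  Matrix.of fun i j => if (j : ℕ) < (i : ℕ) then A i j else 0

/-- Strictly upper triangular part of a matrix. -/
def strictUpper {n : ℕ} (A : Matrix (Fin n) (Fin n) ℝ) : Matrix (Fin n) (Fin n) ℝ :=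
  Matrix.of fun i j => if (i : ℕ) < (j : ℕ) then A i j else 0

/-- A positive diagonal matrix. -/
def posDiag {n : ℕ} (Ω : Matrix (Fin n) (Fin n) ℝ) : Prop :=
  (∀ i j, i ≠ j → Ω i j = 0) ∧ ∀ i, 0 < Ω i i

/-!
The vector `x = A⁻¹ 𝟙` is nonnegative with `A x = 𝟙`, so `B x ≥ A x > 0`; in a Z-matrix this
forces `x > 0`. A Z-matrix `B` admitting such an `x` is inverse-positive: if `B y ≥ 0` and `k`
minimises `y k / x k =: c`, then `B (y - c x)` has `k`-th entry `≤ 0` because `y - c x ≥ 0`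
vanishes at `k`, i.e. `(B y) k ≤ c (B x) k`, which forces `c ≥ 0`. Applied to `B y = 0` and to
`B y = eⱼ` this gives invertibility and nonnegativity of `B⁻¹`.
-/

open Finset

namespace Matrix

variable {ι 𝕜 : Type*} [Fintype ι] [Field 𝕜] [LinearOrder 𝕜] [IsStrictOrderedRing 𝕜]
  {B : Matrix ι ι 𝕜} {x : ι → 𝕜}

lemma pos_of_mulVec_pos_of_offDiag_nonpos [DecidableEq ι] (hB : ∀ i j, i ≠ j → B i j ≤ 0)
    (hx : 0 ≤ x) (hBx : ∀ i, 0 < (B *ᵥ x) i) (i : ι) : 0 < x i := by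
  have hoff : ∑ j ∈ univ.erase i, B i j * x j ≤ 0 := sum_nonpos fun j hj =>
    mul_nonpos_of_nonpos_of_nonneg (hB i j (ne_of_mem_erase hj).symm) (hx j)
  have hdiag : (B *ᵥ x) i ≤ B i i * x i := by
    rw [mulVec, dotProduct, ← add_sum_erase _ _ (mem_univ i)]
    linarith
  have hxi : 0 ≤ x i := hx i
  refine hxi.lt_of_ne fun h => ?_
  rw [← h, mul_zero] at hdiag
  linarith [hBx i]

lemma nonneg_of_mulVec_nonneg_of_offDiag_nonpos (hB : ∀ i j, i ≠ j → B i j ≤ 0)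
    (hx : ∀ i, 0 < x i) (hBx : ∀ i, 0 < (B *ᵥ x) i) {y : ι → 𝕜} (hBy : 0 ≤ B *ᵥ y) :
    0 ≤ y := by
  intro i
  obtain ⟨k, -, hk⟩ := exists_min_image univ (fun j => y j / x j) ⟨i, mem_univ i⟩
  set c := y k / x k
  have hyc : ∀ j, c * x j ≤ y j := fun j => (le_div_iff₀ (hx j)).1 (hk j (mem_univ j))
  suffices 0 ≤ c from (mul_nonneg this (hx i).le).trans (hyc i)
  by_contra! hc
  have hterm : ∀ j, B k j * (y j - c * x j) ≤ 0 := by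
    intro j
    by_cases hkj : k = j
    · subst hkj
      simp [c, div_mul_cancel₀ _ (hx k).ne']
    · exact mul_nonpos_of_nonpos_of_nonneg (hB k j hkj) (sub_nonneg.2 (hyc j))
  have hBy_le : (B *ᵥ y) k - c * (B *ᵥ x) k ≤ 0 :=
    calc (B *ᵥ y) k - c * (B *ᵥ x) k = ∑ j, B k j * (y j - c * x j) := by
          simp only [mulVec, dotProduct, mul_sub, sum_sub_distrib, mul_sum, mul_left_comm]
      _ ≤ 0 := sum_nonpos fun j _ => hterm j
  have hBy_k : 0 ≤ (B *ᵥ y) k := hBy k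
  linarith [mul_neg_of_neg_of_pos hc (hBx k)]

variable [DecidableEq ι]

lemma isUnit_det_of_mulVec_pos_of_offDiag_nonpos (hB : ∀ i j, i ≠ j → B i j ≤ 0)
    (hx : ∀ i, 0 < x i) (hBx : ∀ i, 0 < (B *ᵥ x) i) : IsUnit B.det := by
  rw [isUnit_iff_ne_zero, Ne, ← exists_mulVec_eq_zero_iff]
  rintro ⟨v, hv, hBv⟩
  have hv_nonneg := nonneg_of_mulVec_nonneg_of_offDiag_nonpos hB hx hBx hBv.ge
  have hv_nonpos := nonneg_of_mulVec_nonneg_of_offDiag_nonpos hB hx hBx (y := -v)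
    (by rw [mulVec_neg, hBv, neg_zero])
  exact hv (le_antisymm (neg_nonneg.1 hv_nonpos) hv_nonneg)

lemma inv_apply_nonneg_of_mulVec_pos_of_offDiag_nonpos (hB : ∀ i j, i ≠ j → B i j ≤ 0)
    (hx : ∀ i, 0 < x i) (hBx : ∀ i, 0 < (B *ᵥ x) i) (i j : ι) : 0 ≤ B⁻¹ i j := by
  have hdet := isUnit_det_of_mulVec_pos_of_offDiag_nonpos hB hx hBx
  have hcol : 0 ≤ B⁻¹ *ᵥ Pi.single j 1 := by
    refine nonneg_of_mulVec_nonneg_of_offDiag_nonpos hB hx hBx ?_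
    rw [mulVec_mulVec, mul_nonsing_inv _ hdet, one_mulVec]
    exact Pi.single_nonneg.2 zero_le_one
  simpa using hcol i

end Matrix

theorem stmt3 {n : ℕ} (A B : Matrix (Fin n) (Fin n) ℝ)
    (hA : IsMMatrix A) (hB : IsZMatrix B) (hle : ∀ i j, A i j ≤ B i j) :
    IsMMatrix B := by
  obtain ⟨-, hAdet, hAinv⟩ := hA
  set x := A⁻¹ *ᵥ 1
  have hx : 0 ≤ x := fun i => dotProduct_nonneg_of_nonneg (hAinv i) zero_le_one
  have hAx : A *ᵥ x = 1 := by rw [mulVec_mulVec, mul_nonsing_inv _ hAdet, one_mulVec]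
  have hBx : ∀ i, 0 < (B *ᵥ x) i := fun i =>
    calc (0 : ℝ) < (A *ᵥ x) i := by rw [hAx]; exact one_pos
      _ ≤ (B *ᵥ x) i := dotProduct_le_dotProduct_of_nonneg_right (hle i) hx
  have hxpos := pos_of_mulVec_pos_of_offDiag_nonpos hB hx hBx
  exact ⟨hB, isUnit_det_of_mulVec_pos_of_offDiag_nonpos hB hxpos hBx,
    inv_apply_nonneg_of_mulVec_pos_of_offDiag_nonpos hB hxpos hBx⟩
end

section
/- If A is an H-matrix, then A is invertible and |A^{-1}| ≤ ⟨A⟩^{-1} entrywise, where ⟨A⟩ is the comparison matrix of A. -/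
open Matrix BigOperators Filter

/-! The proof rests on the pointwise inequality `⟨A⟩ |x| ≤ |A x|`, a reverse triangle inequality
row by row. Since `⟨A⟩⁻¹ ≥ 0`, it gives `|x| ≤ ⟨A⟩⁻¹ |A x|` for every `x`: so `A x = 0` forces
`x = 0`, and taking for `x` the `j`-th column of `A⁻¹` bounds that column by the `j`-th column
of `⟨A⟩⁻¹`. -/

namespace Matrix

theorem mulVec_mono_of_nonneg {m n R : Type*} [Fintype n] [Semiring R] [PartialOrder R]
    [IsOrderedRing R] {M : Matrix m n R} (hM : ∀ i j, 0 ≤ M i j) {u v : n → R} (huv : u ≤ v) :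
    M *ᵥ u ≤ M *ᵥ v := fun i =>
  Finset.sum_le_sum fun k _ => mul_le_mul_of_nonneg_left (huv k) (hM i k)

theorem le_nonsing_inv_mulVec_of_mulVec_le {n R : Type*} [Fintype n] [DecidableEq n]
    [CommRing R] [PartialOrder R] [IsOrderedRing R] {M : Matrix n n R} (hM : IsUnit M.det)
    (hM_inv : ∀ i j, 0 ≤ M⁻¹ i j) {u v : n → R} (h : M *ᵥ u ≤ v) : u ≤ M⁻¹ *ᵥ v :=
  calc u = M⁻¹ *ᵥ (M *ᵥ u) := by rw [mulVec_mulVec, nonsing_inv_mul M hM, one_mulVec]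
    _ ≤ M⁻¹ *ᵥ v := mulVec_mono_of_nonneg hM_inv h

end Matrix

theorem cmpMatrix_mulVec_apply {n : ℕ} (A : Matrix (Fin n) (Fin n) ℝ) (x : Fin n → ℝ)
    (i : Fin n) :
    (cmpMatrix A *ᵥ x) i = |A i i| * x i - ∑ k ∈ Finset.univ.erase i, |A i k| * x k := by
  rw [mulVec, dotProduct, ← Finset.add_sum_erase _ _ (Finset.mem_univ i), sub_eq_add_neg,
    ← Finset.sum_neg_distrib]
  refine congrArg₂ _ (by simp [cmpMatrix]) (Finset.sum_congr rfl fun k hk => ?_)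
  simp [cmpMatrix, (Finset.ne_of_mem_erase hk).symm]

theorem cmpMatrix_mulVec_vecAbs_le {n : ℕ} (A : Matrix (Fin n) (Fin n) ℝ) (x : Fin n → ℝ) :
    cmpMatrix A *ᵥ vecAbs x ≤ vecAbs (A *ᵥ x) := by
  intro i
  have hdiag : A i i * x i = (A *ᵥ x) i - ∑ k ∈ Finset.univ.erase i, A i k * x k := by
    rw [mulVec, dotProduct, ← Finset.add_sum_erase _ _ (Finset.mem_univ i)]
    ring
  have hoff : |∑ k ∈ Finset.univ.erase i, A i k * x k|
      ≤ ∑ k ∈ Finset.univ.erase i, |A i k| * |x k| := by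
    simpa only [abs_mul] using Finset.abs_sum_le_sum_abs (fun k => A i k * x k) _
  have hrow : |A i i| * |x i| ≤ |(A *ᵥ x) i| + ∑ k ∈ Finset.univ.erase i, |A i k| * |x k| := by
    rw [← abs_mul, hdiag]
    exact (abs_sub _ _).trans (add_le_add le_rfl hoff)
  simp only [cmpMatrix_mulVec_apply, vecAbs]
  linarith

theorem IsHMatrix.vecAbs_le {n : ℕ} {A : Matrix (Fin n) (Fin n) ℝ} (hA : IsHMatrix A)
    (x : Fin n → ℝ) : vecAbs x ≤ (cmpMatrix A)⁻¹ *ᵥ vecAbs (A *ᵥ x) :=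
  Matrix.le_nonsing_inv_mulVec_of_mulVec_le hA.2.1 hA.2.2 (cmpMatrix_mulVec_vecAbs_le A x)

theorem IsHMatrix.isUnit_det {n : ℕ} {A : Matrix (Fin n) (Fin n) ℝ} (hA : IsHMatrix A) :
    IsUnit A.det := by
  rw [isUnit_iff_ne_zero, Ne, ← Matrix.exists_mulVec_eq_zero_iff]
  rintro ⟨x, hx, hAx⟩
  refine hx (funext fun i => abs_nonpos_iff.mp ?_)
  have := hA.vecAbs_le x i
  rwa [hAx, show vecAbs (0 : Fin n → ℝ) = 0 from funext fun _ => abs_zero,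
    Matrix.mulVec_zero] at this

theorem stmt4 {n : ℕ} (A : Matrix (Fin n) (Fin n) ℝ) (hA : IsHMatrix A) :
    IsUnit A.det ∧ ∀ i j, |A⁻¹ i j| ≤ (cmpMatrix A)⁻¹ i j := by
  refine ⟨hA.isUnit_det, fun i j => ?_⟩
  have hcol : A *ᵥ (A⁻¹ *ᵥ Pi.single j 1) = Pi.single j 1 := by
    rw [Matrix.mulVec_mulVec, Matrix.mul_nonsing_inv A hA.isUnit_det, Matrix.one_mulVec]
  have habs : vecAbs (Pi.single j 1 : Fin n → ℝ) = Pi.single j 1 := by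
    funext k
    by_cases hk : k = j <;> simp [vecAbs, hk]
  have := hA.vecAbs_le (A⁻¹ *ᵥ Pi.single j 1) i
  rwa [hcol, habs, Matrix.mulVec_single_one, Matrix.mulVec_single_one] at this
end

section
/- If A is an M-matrix and A = M - N is an M-splitting (M is a nonsingular M-matrix and N ≥ 0 entrywise), then the spectral radius of M^{-1}N is strictly less than 1. -/
open Matrix BigOperators Filter

/-! With `T = M⁻¹N` and `S = A⁻¹M` we have `T ≥ 0`, `S = 1 + A⁻¹N ≥ 0` and `(1 - T) S = 1`. Hence
the partial Neumann sums `∑_{m<k} Tᵐ = S - Tᵏ S` are bounded entrywise by `S`, so the series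
converges and `Tᵏ → 0`. For an eigenvector `v` of `T` with eigenvalue `μ` this gives
`μᵏ v = Tᵏ v → 0`, which forces `|μ| < 1`. -/

open Topology

namespace Matrix

variable {ι R : Type*} [Fintype ι]

lemma mul_apply_nonneg {l m : Type*} [Semiring R] [PartialOrder R] [IsOrderedRing R]
    {P : Matrix l ι R} {Q : Matrix ι m R}
    (hP : ∀ i j, 0 ≤ P i j) (hQ : ∀ i j, 0 ≤ Q i j) (i : l) (j : m) : 0 ≤ (P * Q) i j :=
  Finset.sum_nonneg fun k _ => mul_nonneg (hP i k) (hQ k j)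

lemma one_sub_inv_mul_mul_inv_mul_eq_one [DecidableEq ι] [CommRing R]
    {A M N : Matrix ι ι R} (hA : IsUnit A.det) (hM : IsUnit M.det)
    (h : A = M - N) : (1 - M⁻¹ * N) * (A⁻¹ * M) = 1 := by
  have hT : 1 - M⁻¹ * N = M⁻¹ * A := by rw [h, mul_sub, nonsing_inv_mul M hM]
  rw [hT, mul_assoc, ← mul_assoc A, mul_nonsing_inv A hA, one_mul, nonsing_inv_mul M hM]

lemma geom_sum_add_pow_mul_eq [DecidableEq ι] [Ring R] {T S : Matrix ι ι R}
    (h : (1 - T) * S = 1) (k : ℕ) : ∑ m ∈ Finset.range k, T ^ m + T ^ k * S = S := by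
  have : ∑ m ∈ Finset.range k, T ^ m = (1 - T ^ k) * S := by
    rw [← geom_sum_mul_neg, mul_assoc, h, mul_one]
  rw [this, sub_mul, one_mul, sub_add_cancel]

lemma tendsto_pow_apply_of_one_sub_mul_eq_one [DecidableEq ι] {T S : Matrix ι ι ℝ}
    (hT : ∀ i j, 0 ≤ T i j) (hS : ∀ i j, 0 ≤ S i j) (h : (1 - T) * S = 1) (i j : ι) :
    Tendsto (fun k => (T ^ k) i j) atTop (𝓝 0) := by
  refine Summable.tendsto_atTop_zero
    (summable_of_sum_range_le (c := S i j) (fun k => pow_apply_nonneg hT k i j) fun k => ?_)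
  have hsum := congrFun (congrFun (geom_sum_add_pow_mul_eq h k) i) j
  rw [add_apply, sum_apply] at hsum
  linarith [mul_apply_nonneg (pow_apply_nonneg hT k) hS i j]

lemma norm_lt_one_of_isRoot_charpoly [DecidableEq ι] {𝕜 : Type*} [NormedField 𝕜]
    {B : Matrix ι ι 𝕜} (hB : ∀ i j, Tendsto (fun k => (B ^ k) i j) atTop (𝓝 0))
    {μ : 𝕜} (hμ : B.charpoly.IsRoot μ) : ‖μ‖ < 1 := by
  rw [← charpoly_toLin', ← Module.End.hasEigenvalue_iff_isRoot_charpoly] at hμ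
  obtain ⟨v, hv⟩ := hμ.exists_hasEigenvector
  obtain ⟨i, hi⟩ : ∃ i, v i ≠ 0 := Function.ne_iff.mp hv.2
  have hpow (k : ℕ) : (B ^ k *ᵥ v) i = μ ^ k * v i := by
    simpa [← toLin'_pow] using congrFun (hv.pow_apply k) i
  have hlim : Tendsto (fun k => (B ^ k *ᵥ v) i) atTop (𝓝 0) := by
    simpa [mulVec, dotProduct] using
      tendsto_finsetSum Finset.univ fun j _ => (hB i j).mul_const (v j)
  simp only [hpow] at hlim
  rw [← tendsto_pow_atTop_nhds_zero_iff_norm_lt_one]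
  simpa [hi] using hlim.mul_const (v i)⁻¹

end Matrix

lemma specRad_lt_of_forall_isRoot {n : ℕ} {A : Matrix (Fin n) (Fin n) ℝ} {r : ℝ} (hr : 0 < r)
    (h : ∀ μ : ℂ, (A.map Complex.ofReal).charpoly.IsRoot μ → ‖μ‖ < r) : specRad A < r := by
  rw [specRad]
  obtain hE | hE := Set.eq_empty_or_nonempty
    {x : ℝ | ∃ μ : ℂ, (A.map Complex.ofReal).charpoly.IsRoot μ ∧ x = ‖μ‖}
  · rwa [hE, Real.sSup_empty]
  have hfin : {x : ℝ | ∃ μ : ℂ, (A.map Complex.ofReal).charpoly.IsRoot μ ∧ x = ‖μ‖}.Finite :=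
    ((Polynomial.finite_setOfPred_isRoot (charpoly_monic _).ne_zero).image (‖·‖)).subset
      fun _ ⟨μ, hμ, hx⟩ => ⟨μ, hμ, hx.symm⟩
  rw [hfin.csSup_lt_iff hE]
  rintro _ ⟨μ, hμ, rfl⟩
  exact h μ hμ

theorem stmt6 {n : ℕ} (A M N : Matrix (Fin n) (Fin n) ℝ)
    (hA : IsMMatrix A) (hsplit : A = M - N)
    (hM : IsMMatrix M) (hN : ∀ i j, 0 ≤ N i j) :
    specRad (M⁻¹ * N) < 1 := by
  have hT : ∀ i j, 0 ≤ (M⁻¹ * N) i j := mul_apply_nonneg hM.2.2 hN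
  have hS : ∀ i j, 0 ≤ (A⁻¹ * M) i j := by
    intro i j
    rw [← eq_sub_iff_add_eq.mp hsplit, mul_add, nonsing_inv_mul A hA.2.1, Matrix.add_apply]
    exact add_nonneg (by rw [one_apply]; positivity) (mul_apply_nonneg hA.2.2 hN i j)
  have hpow := tendsto_pow_apply_of_one_sub_mul_eq_one hT hS
    (one_sub_inv_mul_mul_inv_mul_eq_one hA.2.1 hM.2.1 hsplit)
  refine specRad_lt_of_forall_isRoot one_pos fun μ hμ =>
    norm_lt_one_of_isRoot_charpoly (fun i j => ?_) hμ
  have hmap (k : ℕ) : (M⁻¹ * N).map Complex.ofReal ^ k = ((M⁻¹ * N) ^ k).map Complex.ofReal :=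
    (map_pow Complex.ofRealHom.mapMatrix _ k).symm
  simpa [hmap, Function.comp_def] using (Complex.continuous_ofReal.tendsto 0).comp (hpow i j)
end

section
/- If the spectral radius of T = |(M₁ + Ω₁ + I - L₁)^{-1}|(|N₁ + I - L₁| + |Ω₁ - A₁|) is strictly less than 1, then the iteration s^{(k+1)} = (M₁+Ω₁+I-L₁)^{-1}[(N₁+I-L₁)s^{(k)} + (Ω₁-A₁)|s^{(k)}| - rq] converges to the unique fixed point s* for any initial vector s^{(0)} ∈ R^n. -/
open Matrix BigOperators Filter

/-! Componentwise, `|F x - F y| ≤ T |x - y|` because `||x| - |y|| ≤ |x - y|`, so iterating against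
the fixed point gives `|s k - s*| ≤ T ^ k |s 0 - s*|`. Since `ρ(T) < 1`, Gelfand's formula for `T`
viewed as a complex matrix with the `∞`-operator norm gives `‖T ^ k‖ → 0`. A second fixed point is
a constant orbit, so it also tends to `s*`. -/

open scoped Topology

theorem tendsto_pow_nhds_zero_of_spectralRadius_lt_one {A : Type*} [NormedRing A]
    [NormedAlgebra ℂ A] [CompleteSpace A] (a : A) (h : spectralRadius ℂ a < 1) :
    Tendsto (fun k : ℕ => a ^ k) atTop (𝓝 0) := by
  obtain ⟨R, hρR, hR1⟩ := ENNReal.lt_iff_exists_nnreal_btwn.mp h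
  have hbound : ∀ᶠ k : ℕ in atTop, ‖a ^ k‖ ≤ (R : ℝ) ^ k := by
    filter_upwards [(spectrum.pow_nnnorm_pow_one_div_tendsto_nhds_spectralRadius a).eventually_lt_const
      hρR, eventually_gt_atTop 0] with k hk hk0
    rw [one_div, ENNReal.rpow_inv_lt_iff (by positivity), ENNReal.rpow_natCast] at hk
    exact_mod_cast hk.le
  exact squeeze_zero_norm' hbound
    (tendsto_pow_atTop_nhds_zero_of_lt_one R.coe_nonneg (by exact_mod_cast hR1))

theorem spectralRadius_map_ofReal_le {n : ℕ} (T : Matrix (Fin n) (Fin n) ℝ) :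
    spectralRadius ℂ (T.map Complex.ofReal) ≤ ENNReal.ofReal (specRad T) := by
  have hbdd : BddAbove {x : ℝ | ∃ μ : ℂ, (T.map Complex.ofReal).charpoly.IsRoot μ ∧ x = ‖μ‖} := by
    have hroots := Polynomial.finite_setOfPred_isRoot (T.map Complex.ofReal).charpoly_monic.ne_zero
    refine ((hroots.image (fun μ : ℂ => ‖μ‖)).subset ?_).bddAbove
    rintro _ ⟨μ, hμ, rfl⟩
    exact ⟨μ, hμ, rfl⟩
  refine iSup₂_le fun μ hμ => ?_
  rw [← enorm_eq_nnnorm, ← ofReal_norm]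
  exact ENNReal.ofReal_le_ofReal
    (le_csSup hbdd ⟨μ, Matrix.mem_spectrum_iff_isRoot_charpoly.mp hμ, rfl⟩)

section LinftyOpNorm

attribute [local instance] Matrix.linftyOpNormedAddCommGroup Matrix.linftyOpNormedRing
  Matrix.linftyOpNormedAlgebra

theorem Matrix.linfty_opNNNorm_map_ofReal {m n : Type*} [Fintype m] [Fintype n]
    (A : Matrix m n ℝ) : ‖A.map Complex.ofReal‖₊ = ‖A‖₊ := by
  simp only [Matrix.linfty_opNNNorm_def, Matrix.map_apply, Complex.nnnorm_real]

theorem tendsto_pow_mulVec_nhds_zero_of_specRad_lt_one {n : ℕ} {T : Matrix (Fin n) (Fin n) ℝ}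
    (hρ : specRad T < 1) (c : Fin n → ℝ) : Tendsto (fun k : ℕ => T ^ k *ᵥ c) atTop (𝓝 0) := by
  have hc : Tendsto (fun k : ℕ => T.map Complex.ofReal ^ k) atTop (𝓝 0) :=
    tendsto_pow_nhds_zero_of_spectralRadius_lt_one _ <|
      (spectralRadius_map_ofReal_le T).trans_lt (by simpa using hρ)
  have hnorm : Tendsto (fun k : ℕ => ‖T ^ k‖ * ‖c‖) atTop (𝓝 0) := by
    have hpow (k : ℕ) : T.map Complex.ofReal ^ k = (T ^ k).map Complex.ofReal :=
      (map_pow Complex.ofRealHom.mapMatrix T k).symm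
    simpa [hpow, ← coe_nnnorm, Matrix.linfty_opNNNorm_map_ofReal]
      using (tendsto_zero_iff_norm_tendsto_zero.mp hc).mul_const ‖c‖
  exact squeeze_zero_norm (fun k => Matrix.linfty_opNorm_mulVec _ _) hnorm

end LinftyOpNorm

theorem Matrix.mulVec_mono_of_nonneg_s12 {m n : Type*} [Fintype n] {A : Matrix m n ℝ}
    (hA : ∀ i j, 0 ≤ A i j) {u v : n → ℝ} (huv : u ≤ v) : A *ᵥ u ≤ A *ᵥ v := fun i =>
  Finset.sum_le_sum fun j _ => mul_le_mul_of_nonneg_left (huv j) (hA i j)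

section Comparison

variable {n : ℕ}

theorem vecAbs_add_le (u v : Fin n → ℝ) : vecAbs (u + v) ≤ vecAbs u + vecAbs v := fun i =>
  abs_add_le (u i) (v i)

theorem vecAbs_vecAbs_sub_vecAbs_le (u v : Fin n → ℝ) :
    vecAbs (vecAbs u - vecAbs v) ≤ vecAbs (u - v) := fun i =>
  abs_abs_sub_abs_le_abs_sub (u i) (v i)

theorem matAbs_nonneg (A : Matrix (Fin n) (Fin n) ℝ) (i j : Fin n) : 0 ≤ matAbs A i j :=
  abs_nonneg (A i j)

theorem vecAbs_mulVec_le (A : Matrix (Fin n) (Fin n) ℝ) (v : Fin n → ℝ) :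
    vecAbs (A *ᵥ v) ≤ matAbs A *ᵥ vecAbs v := fun i => by
  have := Finset.abs_sum_le_sum_abs (fun j => A i j * v j) Finset.univ
  simpa [Matrix.mulVec, dotProduct, matAbs, vecAbs, abs_mul] using this

theorem matAbs_mul_add_matAbs_nonneg (B C D : Matrix (Fin n) (Fin n) ℝ) (i j : Fin n) :
    0 ≤ (matAbs B * (matAbs C + matAbs D)) i j :=
  Matrix.mul_apply (M := matAbs B) ▸ Finset.sum_nonneg fun l _ =>
    mul_nonneg (matAbs_nonneg B i l) (add_nonneg (matAbs_nonneg C l j) (matAbs_nonneg D l j))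

theorem vecAbs_sub_le_mulVec_vecAbs_sub (B C D : Matrix (Fin n) (Fin n) ℝ) (b x y : Fin n → ℝ) :
    vecAbs (B *ᵥ (C *ᵥ x + D *ᵥ vecAbs x - b) - B *ᵥ (C *ᵥ y + D *ᵥ vecAbs y - b)) ≤
      (matAbs B * (matAbs C + matAbs D)) *ᵥ vecAbs (x - y) := by
  have hdiff : B *ᵥ (C *ᵥ x + D *ᵥ vecAbs x - b) - B *ᵥ (C *ᵥ y + D *ᵥ vecAbs y - b) =
      B *ᵥ (C *ᵥ (x - y) + D *ᵥ (vecAbs x - vecAbs y)) := by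
    rw [← Matrix.mulVec_sub, Matrix.mulVec_sub C, Matrix.mulVec_sub D]
    congr 1
    abel
  have hinner : vecAbs (C *ᵥ (x - y) + D *ᵥ (vecAbs x - vecAbs y)) ≤
      (matAbs C + matAbs D) *ᵥ vecAbs (x - y) := by
    rw [Matrix.add_mulVec]
    refine (vecAbs_add_le _ _).trans (add_le_add (vecAbs_mulVec_le C _) ?_)
    exact (vecAbs_mulVec_le D _).trans
      (Matrix.mulVec_mono_of_nonneg_s12 (matAbs_nonneg D) (vecAbs_vecAbs_sub_vecAbs_le x y))
  rw [hdiff, ← Matrix.mulVec_mulVec]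
  exact (vecAbs_mulVec_le B _).trans (Matrix.mulVec_mono_of_nonneg_s12 (matAbs_nonneg B) hinner)

theorem vecAbs_sub_fixedPoint_le_pow_mulVec {T : Matrix (Fin n) (Fin n) ℝ}
    (hT : ∀ i j, 0 ≤ T i j) {G : (Fin n → ℝ) → Fin n → ℝ} {p : Fin n → ℝ}
    (hG : ∀ x, vecAbs (G x - G p) ≤ T *ᵥ vecAbs (x - p)) (hp : G p = p)
    {s : ℕ → Fin n → ℝ} (hs : ∀ k, s (k + 1) = G (s k)) (k : ℕ) :
    vecAbs (s k - p) ≤ T ^ k *ᵥ vecAbs (s 0 - p) := by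
  induction k with
  | zero => rw [pow_zero, Matrix.one_mulVec]
  | succ k ih =>
    calc vecAbs (s (k + 1) - p) = vecAbs (G (s k) - G p) := by rw [hs, hp]
      _ ≤ T *ᵥ vecAbs (s k - p) := hG (s k)
      _ ≤ T *ᵥ (T ^ k *ᵥ vecAbs (s 0 - p)) := Matrix.mulVec_mono_of_nonneg_s12 hT ih
      _ = T ^ (k + 1) *ᵥ vecAbs (s 0 - p) := by rw [Matrix.mulVec_mulVec, pow_succ']

theorem tendsto_of_vecAbs_sub_le {s u : ℕ → Fin n → ℝ} {p : Fin n → ℝ}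
    (hsu : ∀ k, vecAbs (s k - p) ≤ u k) (hu : Tendsto u atTop (𝓝 0)) :
    Tendsto s atTop (𝓝 p) := by
  rw [tendsto_pi_nhds]
  intro i
  exact tendsto_sub_nhds_zero_iff.mp
    (squeeze_zero_norm (fun k => hsu k i) (((continuous_apply i).tendsto 0).comp hu))

end Comparison

theorem stmt12_general {n : ℕ} (A₁ M₁ N₁ L₁ Ω₁ T : Matrix (Fin n) (Fin n) ℝ)
    (q sstar : Fin n → ℝ) (r : ℝ) (F : (Fin n → ℝ) → (Fin n → ℝ))
    (s : ℕ → Fin n → ℝ)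
    (hF : ∀ x, F x = (M₁ + Ω₁ + 1 - L₁)⁻¹.mulVec
      ((N₁ + 1 - L₁).mulVec x + (Ω₁ - A₁).mulVec (vecAbs x) - r • q))
    (hT : T = matAbs ((M₁ + Ω₁ + 1 - L₁)⁻¹) * (matAbs (N₁ + 1 - L₁) + matAbs (Ω₁ - A₁)))
    (hρ : specRad T < 1)
    (hiter : ∀ k, s (k + 1) = F (s k))
    (hfix : sstar = F sstar) :
    Tendsto s atTop (nhds sstar) ∧ ∀ t, t = F t → t = sstar := by
  have hTnn : ∀ i j, 0 ≤ T i j := hT ▸ matAbs_mul_add_matAbs_nonneg _ _ _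
  have hdom (x : Fin n → ℝ) : vecAbs (F x - F sstar) ≤ T *ᵥ vecAbs (x - sstar) := by
    rw [hF x, hF sstar, hT]
    exact vecAbs_sub_le_mulVec_vecAbs_sub _ _ _ _ x sstar
  have horbit (x : ℕ → Fin n → ℝ) (hx : ∀ k, x (k + 1) = F (x k)) :
      Tendsto x atTop (𝓝 sstar) :=
    tendsto_of_vecAbs_sub_le (vecAbs_sub_fixedPoint_le_pow_mulVec hTnn hdom hfix.symm hx)
      (tendsto_pow_mulVec_nhds_zero_of_specRad_lt_one hρ _)
  exact ⟨horbit s hiter, fun t ht =>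
    tendsto_nhds_unique tendsto_const_nhds (horbit (fun _ => t) fun _ => ht)⟩

theorem stmt12 {n : ℕ} (A₁ M₁ N₁ L₁ Ω₁ T : Matrix (Fin n) (Fin n) ℝ)
    (q sstar : Fin n → ℝ) (r : ℝ) (F : (Fin n → ℝ) → (Fin n → ℝ))
    (s : ℕ → Fin n → ℝ)
    (hL : L₁ = strictLower A₁) (hΩ : posDiag Ω₁) (hr : 0 < r)
    (hsplit : A₁ = (M₁ + 1 - L₁) - (N₁ + 1 - L₁))
    (hns : IsUnit (M₁ + Ω₁ + 1 - L₁).det)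
    (hF : ∀ x, F x = (M₁ + Ω₁ + 1 - L₁)⁻¹.mulVec
      ((N₁ + 1 - L₁).mulVec x + (Ω₁ - A₁).mulVec (vecAbs x) - r • q))
    (hT : T = matAbs ((M₁ + Ω₁ + 1 - L₁)⁻¹) * (matAbs (N₁ + 1 - L₁) + matAbs (Ω₁ - A₁)))
    (hρ : specRad T < 1)
    (hiter : ∀ k, s (k + 1) = F (s k))
    (hfix : sstar = F sstar) :
    Tendsto s atTop (nhds sstar) ∧ ∀ t, t = F t → t = sstar :=
  stmt12_general A₁ M₁ N₁ L₁ Ω₁ T q sstar r F s hF hT hρ hiter hfix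
end

section
/- If A₁ is a P-matrix, then for any q ∈ R^n the linear complementarity problem LCP(q, A₁) has a unique solution. -/
open Matrix BigOperators Filter

/-!
A P-matrix reverses the sign of no nonzero vector: if `x i * (A *ᵥ x) i ≤ 0` for all `i`, then on
the support of `x` we get `(A + D) *ᵥ x = 0` for a nonnegative diagonal `D`, whereas `det (A + D)`
is a sum of principal minors of `A` with nonnegative weights, the full minor having weight one.
Compactness of the unit sphere makes this uniform: some `i` has `c * ‖x‖ ^ 2 ≤ x i * (A *ᵥ x) i`.
Two solutions of the LCP have a difference all of whose products `x i * (A *ᵥ x) i` are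
nonpositive, hence coincide. Existence is by induction on `n`: solving the leading subproblem with
the last coordinate fixed to `t` gives a path `z t` that fails complementarity only at the last
index, and the uniform estimate makes the last residual `g t` continuous with `g t ≥ g 0 + c * t`,
so it is nonnegative at `t = 0` or vanishes at some `t > 0`.
-/

open Finset

namespace Matrix

variable {m : Type*}

def HasPosPrincipalMinors [DecidableEq m] (A : Matrix m m ℝ) : Prop :=
  ∀ s : Finset m, 0 < (A.submatrix ((↑) : s → m) (↑)).det

theorem det_add_diagonal_eq_sum [Fintype m] [DecidableEq m] (A : Matrix m m ℝ) (d : m → ℝ) :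
    (A + diagonal d).det =
      ∑ s : Finset m, (∏ i ∈ sᶜ, d i) * (A.submatrix ((↑) : s → m) (↑)).det := by
  have hrows (s : Finset m) : Matrix.of (s.piecewise A.row (diagonal d).row)
      = diagonal (fun i => if i ∈ s then 1 else d i) *
          Matrix.of (s.piecewise A.row (1 : Matrix m m ℝ).row) := by
    ext i j
    by_cases hi : i ∈ s <;> simp [hi, Finset.piecewise, diagonal_apply, one_apply, row]
  -- Expand `det` multilinearly in the rows: row `i` of `diagonal d` is `d i` times row `i` of `1`.
  change detRowAlternating (A.row + (diagonal d).row) = _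
  rw [AlternatingMap.map_add_univ]
  refine sum_congr rfl fun s _ => ?_
  change (Matrix.of (s.piecewise A.row (diagonal d).row)).det = _
  rw [hrows, det_mul, det_diagonal, det_piecewise_one_eq_submatrix_det, prod_ite, prod_const_one,
    one_mul]
  congr 2
  ext
  simp

theorem HasPosPrincipalMinors.det_pos [Fintype m] [DecidableEq m] {A : Matrix m m ℝ}
    (hA : A.HasPosPrincipalMinors) : 0 < A.det := by
  simpa using det_submatrix_equiv_self (Equiv.subtypeUnivEquiv mem_univ) A ▸ hA univ

theorem HasPosPrincipalMinors.submatrix [DecidableEq m] {m' : Type*} [DecidableEq m']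
    {A : Matrix m m ℝ} (hA : A.HasPosPrincipalMinors) {f : m' → m} (hf : f.Injective) :
    (A.submatrix f f).HasPosPrincipalMinors := by
  intro s
  simpa [← det_submatrix_equiv_self (s.equivMap ⟨f, hf⟩), submatrix_submatrix,
    Function.comp_def] using hA (s.map ⟨f, hf⟩)

theorem HasPosPrincipalMinors.det_add_diagonal_pos [Fintype m] [DecidableEq m]
    {A : Matrix m m ℝ} (hA : A.HasPosPrincipalMinors) {d : m → ℝ} (hd : 0 ≤ d) :
    0 < (A + diagonal d).det := by
  rw [det_add_diagonal_eq_sum]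
  refine hA.det_pos.trans_le ?_
  convert single_le_sum (fun s _ => mul_nonneg (prod_nonneg fun i _ => hd i) (hA s).le)
    (mem_univ (univ : Finset m)) using 1
  rw [compl_univ, prod_empty, one_mul]
  exact (det_submatrix_equiv_self (Equiv.subtypeUnivEquiv mem_univ) A).symm

def ReversesNoSign [Fintype m] (A : Matrix m m ℝ) : Prop :=
  ∀ x : m → ℝ, x ≠ 0 → ∃ i, 0 < x i * (A *ᵥ x) i

theorem HasPosPrincipalMinors.reversesNoSign [Fintype m] [DecidableEq m] {A : Matrix m m ℝ}
    (hA : A.HasPosPrincipalMinors) : A.ReversesNoSign := by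
  intro x hx
  by_contra! hsign
  set S := univ.filter (x · ≠ 0)
  set y : S → ℝ := fun i => x i
  have hyx (i : S) : (A.submatrix (↑) (↑) *ᵥ y) i = (A *ᵥ x) i := by
    simp only [mulVec, dotProduct, submatrix_apply, y]
    rw [sum_coe_sort S fun j => A i j * x j]
    exact sum_filter_of_ne fun j _ hj => right_ne_zero_of_mul hj
  have hxS (i : S) : x i ≠ 0 := (mem_filter.1 i.2).2
  set d : S → ℝ := fun i => -((A *ᵥ x) i / x i)
  have hd : 0 ≤ d := fun i => by
    rw [Pi.zero_apply, le_neg, neg_zero, ← mul_div_mul_left _ _ (hxS i)]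
    exact div_nonpos_of_nonpos_of_nonneg (hsign i) (mul_self_nonneg _)
  have hker : (A.submatrix (↑) (↑) + diagonal d) *ᵥ y = 0 := by
    ext i
    rw [add_mulVec, Pi.add_apply, mulVec_diagonal, hyx]
    simp [d, y, div_mul_cancel₀ _ (hxS i)]
  have hy : y ≠ 0 := by
    obtain ⟨i, hi⟩ := Function.ne_iff.1 hx
    exact Function.ne_iff.2 ⟨⟨i, mem_filter.2 ⟨mem_univ i, hi⟩⟩, hi⟩
  exact ((hA.submatrix Subtype.val_injective).det_add_diagonal_pos hd).ne'
    (exists_mulVec_eq_zero_iff.1 ⟨y, hy, hker⟩)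

theorem ReversesNoSign.exists_pos_mul_sq_norm_le [Fintype m] {A : Matrix m m ℝ}
    (hA : A.ReversesNoSign) :
    ∃ c > 0, ∀ x : m → ℝ, x ≠ 0 → ∃ i, c * ‖x‖ ^ 2 ≤ x i * (A *ᵥ x) i := by
  cases isEmpty_or_nonempty m
  · exact ⟨1, one_pos, fun x hx => (hx (Subsingleton.elim x 0)).elim⟩
  set f : (m → ℝ) → ℝ := fun x => univ.sup' univ_nonempty fun i => x i * (A *ᵥ x) i
  have hf : Continuous f := by
    refine Continuous.finset_sup'_apply _ fun i _ => ?_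
    fun_prop
  obtain ⟨c, hc, hcf⟩ := (isCompact_sphere (0 : m → ℝ) 1).exists_forall_le' hf.continuousOn
    (a := 0) fun u hu => by
      obtain ⟨i, hi⟩ := hA u (ne_zero_of_mem_unit_sphere ⟨u, hu⟩)
      exact (lt_sup'_iff _).2 ⟨i, mem_univ i, hi⟩
  refine ⟨c, hc, fun x hx => ?_⟩
  have hx' : ‖x‖ ≠ 0 := norm_ne_zero_iff.2 hx
  set u := ‖x‖⁻¹ • x
  obtain ⟨i, -, hi⟩ := exists_mem_eq_sup' univ_nonempty fun i => u i * (A *ᵥ u) i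
  refine ⟨i, ?_⟩
  have hcu : c ≤ u i * (A *ᵥ u) i := hi ▸ hcf u (by simp [u, norm_smul, hx'])
  have hu : u i * (A *ᵥ u) i = (‖x‖ ^ 2)⁻¹ * (x i * (A *ᵥ x) i) := by
    simp only [u, mulVec_smul, Pi.smul_apply, smul_eq_mul]
    ring
  rw [hu, inv_mul_eq_div, le_div_iff₀ (by positivity)] at hcu
  linarith

end Matrix

def IsComplementaryPair (a b : ℝ) : Prop :=
  0 ≤ a ∧ 0 ≤ b ∧ a * b = 0

theorem IsComplementaryPair.sub_mul_sub_nonpos {a b a' b' : ℝ} (h : IsComplementaryPair a b)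
    (h' : IsComplementaryPair a' b') : (a' - a) * (b' - b) ≤ 0 := by
  obtain ⟨ha, hb, hab⟩ := h
  obtain ⟨ha', hb', hab'⟩ := h'
  nlinarith [mul_nonneg ha hb', mul_nonneg ha' hb]

def IsLCPSolution {m : Type*} [Fintype m] (A : Matrix m m ℝ) (q z : m → ℝ) : Prop :=
  ∀ i, IsComplementaryPair (z i) ((A *ᵥ z + q) i)

theorem isLCPSolution_iff {m : Type*} [Fintype m] (A : Matrix m m ℝ) (q z : m → ℝ) :
    IsLCPSolution A q z ↔
      (∀ i, 0 ≤ z i) ∧ (∀ i, 0 ≤ (A *ᵥ z + q) i) ∧ ∑ i, z i * (A *ᵥ z + q) i = 0 := by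
  refine ⟨fun h => ⟨fun i => (h i).1, fun i => (h i).2.1, sum_eq_zero fun i _ => (h i).2.2⟩,
    fun ⟨hz, hw, hzw⟩ i => ⟨hz i, hw i, ?_⟩⟩
  exact (sum_eq_zero_iff_of_nonneg fun i _ => mul_nonneg (hz i) (hw i)).1 hzw i (mem_univ i)

namespace Matrix

variable {m : Type*} [Fintype m]

theorem ReversesNoSign.isLCPSolution_unique {A : Matrix m m ℝ} (hA : A.ReversesNoSign)
    {q z z' : m → ℝ} (hz : IsLCPSolution A q z) (hz' : IsLCPSolution A q z') : z = z' := by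
  by_contra hne
  obtain ⟨i, hi⟩ := hA (z' - z) (sub_ne_zero.2 (Ne.symm hne))
  have hw : (A *ᵥ (z' - z)) i = (A *ᵥ z' + q) i - (A *ᵥ z + q) i := by
    simp [mulVec_sub]
  rw [hw, Pi.sub_apply] at hi
  exact hi.not_ge ((hz i).sub_mul_sub_nonpos (hz' i))

theorem mul_sq_norm_sub_le_of_isComplementaryPair {A : Matrix m m ℝ} {c : ℝ} (hc : 0 < c)
    (hcA : ∀ x : m → ℝ, x ≠ 0 → ∃ i, c * ‖x‖ ^ 2 ≤ x i * (A *ᵥ x) i) {q z z' : m → ℝ} {j : m}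
    (hz : ∀ i ≠ j, IsComplementaryPair (z i) ((A *ᵥ z + q) i))
    (hz' : ∀ i ≠ j, IsComplementaryPair (z' i) ((A *ᵥ z' + q) i)) :
    c * ‖z' - z‖ ^ 2 ≤ (z' - z) j * (A *ᵥ (z' - z)) j := by
  rcases eq_or_ne (z' - z) 0 with h0 | h0
  · simp [h0]
  obtain ⟨i, hi⟩ := hcA _ h0
  rcases eq_or_ne i j with rfl | hij
  · exact hi
  · have hw : A *ᵥ (z' - z) = (A *ᵥ z' + q) - (A *ᵥ z + q) := by
      simp [mulVec_sub]
    rw [hw] at hi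
    have := (hz i hij).sub_mul_sub_nonpos (hz' i hij)
    have : 0 < c * ‖z' - z‖ ^ 2 := by positivity
    simp only [Pi.sub_apply] at hi
    linarith

theorem continuous_of_mul_sq_norm_sub_le {A : Matrix m m ℝ} {c : ℝ} (hc : 0 < c)
    {z : ℝ → m → ℝ} {j : m} (hzj : ∀ t, z t j = t)
    (hest : ∀ s t, c * ‖z t - z s‖ ^ 2 ≤ (z t - z s) j * (A *ᵥ (z t - z s)) j) :
    Continuous z := by
  set L := ‖LinearMap.toContinuousLinearMap (mulVecLin A)‖
  have hL (x : m → ℝ) : |(A *ᵥ x) j| ≤ L * ‖x‖ :=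
    (norm_le_pi_norm (A *ᵥ x) j).trans
      ((LinearMap.toContinuousLinearMap (mulVecLin A)).le_opNorm x)
  refine (LipschitzWith.of_dist_le_mul (K := (L / c).toNNReal) fun t s => ?_).continuous
  rw [Real.coe_toNNReal _ (by positivity), dist_eq_norm, Real.dist_eq, div_mul_eq_mul_div,
    le_div_iff₀ hc]
  set x := z t - z s
  have hxj : x j = t - s := by simp [x, hzj]
  rcases (norm_nonneg x).eq_or_lt with h0 | hpos
  · rw [← h0, zero_mul]; positivity
  refine le_of_mul_le_mul_right ?_ hpos
  calc ‖x‖ * c * ‖x‖ = c * ‖x‖ ^ 2 := by ring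
    _ ≤ x j * (A *ᵥ x) j := hest s t
    _ ≤ |t - s| * (L * ‖x‖) := by
        rw [← hxj]
        exact (le_abs_self _).trans
          (by rw [abs_mul]; exact mul_le_mul_of_nonneg_left (hL x) (abs_nonneg _))
    _ = _ := by ring

theorem ReversesNoSign.exists_isLCPSolution_of_path {A : Matrix m m ℝ} (hA : A.ReversesNoSign)
    {q : m → ℝ} {j : m} {z : ℝ → m → ℝ} (hzj : ∀ t, z t j = t)
    (hz : ∀ t, ∀ i ≠ j, IsComplementaryPair (z t i) ((A *ᵥ z t + q) i)) :
    ∃ t, IsLCPSolution A q (z t) := by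
  obtain ⟨c, hc, hcA⟩ := hA.exists_pos_mul_sq_norm_le
  have hest (s t : ℝ) := mul_sq_norm_sub_le_of_isComplementaryPair hc hcA (hz s) (hz t)
  set g : ℝ → ℝ := fun t => (A *ᵥ z t + q) j
  have hg : Continuous g := by
    have := continuous_of_mul_sq_norm_sub_le hc hzj hest
    fun_prop
  have hgrowth (t : ℝ) (ht : 0 < t) : g 0 + c * t ≤ g t := by
    have hx : t ^ 2 ≤ ‖z t - z 0‖ ^ 2 := by
      simpa [hzj] using sq_le_sq' (neg_le_of_abs_le (norm_le_pi_norm (z t - z 0) j))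
        (le_of_abs_le (norm_le_pi_norm (z t - z 0) j))
    have hgt : g t - g 0 = (A *ᵥ (z t - z 0)) j := by simp [g, mulVec_sub]
    have := hest 0 t
    rw [← hgt, Pi.sub_apply, hzj, hzj, sub_zero] at this
    nlinarith [mul_le_mul_of_nonneg_left hx hc.le]
  obtain ⟨t, ht, hgt, htg⟩ : ∃ t, 0 ≤ t ∧ 0 ≤ g t ∧ t * g t = 0 := by
    rcases le_or_gt 0 (g 0) with h0 | h0
    · exact ⟨0, le_rfl, h0, zero_mul _⟩
    set T := -g 0 / c
    have hT : 0 < T := div_pos (neg_pos.2 h0) hc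
    have hgT : 0 ≤ g T := by
      have := hgrowth T hT
      rwa [mul_div_cancel₀ _ hc.ne', add_neg_cancel] at this
    obtain ⟨t, ht, hgt⟩ := intermediate_value_Icc hT.le hg.continuousOn ⟨h0.le, hgT⟩
    exact ⟨t, ht.1, hgt.ge, by rw [hgt, mul_zero]⟩
  refine ⟨t, fun i => ?_⟩
  rcases eq_or_ne i j with rfl | hij
  · exact ⟨(hzj t).symm ▸ ht, hgt, (hzj t).symm ▸ htg⟩
  · exact hz t i hij

theorem mulVec_snoc_castSucc {n : ℕ} (A : Matrix (Fin (n + 1)) (Fin (n + 1)) ℝ)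
    (y : Fin n → ℝ) (t : ℝ) (i : Fin n) :
    (A *ᵥ Fin.snoc y t) i.castSucc =
      (A.submatrix Fin.castSucc Fin.castSucc *ᵥ y) i + t * A i.castSucc (Fin.last n) := by
  simp [mulVec, dotProduct, Fin.sum_univ_castSucc, mul_comm]

theorem HasPosPrincipalMinors.exists_isLCPSolution {n : ℕ}
    {A : Matrix (Fin n) (Fin n) ℝ} (hA : A.HasPosPrincipalMinors) (q : Fin n → ℝ) :
    ∃ z, IsLCPSolution A q z := by
  induction n with
  | zero => exact ⟨0, fun i => i.elim0⟩
  | succ n ih =>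
    choose S hS using ih (hA.submatrix (Fin.castSucc_injective n))
    set a : Fin n → ℝ := fun i => A i.castSucc (Fin.last n)
    obtain ⟨t, ht⟩ := hA.reversesNoSign.exists_isLCPSolution_of_path (q := q)
      (j := Fin.last n) (z := fun t => Fin.snoc (S (q ∘ Fin.castSucc + t • a)) t)
      (fun t => Fin.snoc_last ..)
      fun t i hi => by
        obtain ⟨i, rfl⟩ := Fin.exists_castSucc_eq.2 hi
        convert hS (q ∘ Fin.castSucc + t • a) i using 2
        · simp
        · simp [mulVec_snoc_castSucc, a]
          ring
    exact ⟨_, ht⟩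

end Matrix

theorem stmt15 {n : ℕ} (A : Matrix (Fin n) (Fin n) ℝ) (hA : IsPMatrix A) :
    ∀ q : Fin n → ℝ, ∃! z : Fin n → ℝ,
      (∀ i, 0 ≤ z i) ∧ (∀ i, 0 ≤ (A.mulVec z + q) i) ∧
      ∑ i, z i * (A.mulVec z + q) i = 0 := by
  intro q
  have hP : A.HasPosPrincipalMinors := hA
  obtain ⟨z, hz⟩ := hP.exists_isLCPSolution q
  refine ⟨z, (isLCPSolution_iff A q z).1 hz, fun y hy => ?_⟩
  exact hP.reversesNoSign.isLCPSolution_unique ((isLCPSolution_iff A q y).2 hy) hz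
end
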